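/- Let r_+ > 0 > r_- and let \mu, \delta, \sigma, c, \alpha > 0 satisfy r_\pm = (-(\mu\alpha - \delta) \pm \sqrt{(\mu\alpha-\delta)^2 + 2\sigma^2 c\alpha^2})/(\sigma^2\alpha^2) with 2\delta/\mu < \alpha. Then the quantity x_\alpha = (1/(r_+ - r_-))\log( (r_-(\mu + \alpha\sigma^2 r_-))/(r_+(\mu + \alpha\sigma^2 r_+)) ) is well-defined (the argument of the logarithm is positive) and strictly positive. -/
import Mathlib
set_option maxHeartbeats 800000

theorem stmt_13 (μ δ σ c α : ℝ) (hμ : 0 < μ) (hδ : 0 < δ) (hσ : 0 < σ) (hc : 0 < c)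
    (hα : 0 < α) (hda : 2 * δ / μ < α) (rp rm : ℝ)
    (hrp : rp = (-(μ * α - δ) + Real.sqrt ((μ * α - δ)^2 + 2 * σ^2 * c * α^2)) / (σ^2 * α^2))
    (hrm : rm = (-(μ * α - δ) - Real.sqrt ((μ * α - δ)^2 + 2 * σ^2 * c * α^2)) / (σ^2 * α^2)) :
    0 < (rm * (μ + α * σ^2 * rm)) / (rp * (μ + α * σ^2 * rp)) ∧
    0 < (1 / (rp - rm)) * Real.log ((rm * (μ + α * σ^2 * rm)) / (rp * (μ + α * σ^2 * rp))) := by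
  have hs : (0:ℝ) < σ^2 * α^2 := by positivity
  have hda' : 2 * δ < μ * α := by
    have := (div_lt_iff₀ hμ).mp hda; nlinarith
  set D := Real.sqrt ((μ * α - δ)^2 + 2 * σ^2 * c * α^2) with hDdef
  have hD2 : D^2 = (μ * α - δ)^2 + 2 * σ^2 * c * α^2 := Real.sq_sqrt (by positivity)
  have hDpos : 0 < D := Real.sqrt_pos.mpr (by positivity)
  have h1 : σ^2 * α^2 * rp = -(μ * α - δ) + D := by rw [hrp]; field_simp
  have h2 : σ^2 * α^2 * rm = -(μ * α - δ) - D := by rw [hrm]; field_simp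
  have hDgt : μ * α - δ < D := by nlinarith [sq_nonneg (D - (μ*α-δ)), sq_nonneg (D + (μ*α-δ))]
  have hDgt' : -(μ * α - δ) < D := by nlinarith [sq_nonneg (D - (μ*α-δ)), sq_nonneg (D + (μ*α-δ))]
  have hrppos : 0 < rp := by nlinarith [h1]
  have hrmneg : rm < 0 := by nlinarith [h2]
  have hdiff : 0 < rp - rm := by nlinarith [h1, h2]
  -- quadratic identities
  have hqp : σ^2 * α^2 * rp^2 + 2*(μ*α-δ)*rp - 2*c = 0 := by
    have key : (σ^2*α^2) * (σ^2 * α^2 * rp^2 + 2*(μ*α-δ)*rp - 2*c) = 0 := by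
      linear_combination (σ^2*α^2*rp + (μ*α-δ) + D) * h1 + hD2
    rcases mul_eq_zero.mp key with h | h
    · exact absurd h (ne_of_gt hs)
    · exact h
  have hqm : σ^2 * α^2 * rm^2 + 2*(μ*α-δ)*rm - 2*c = 0 := by
    have key : (σ^2*α^2) * (σ^2 * α^2 * rm^2 + 2*(μ*α-δ)*rm - 2*c) = 0 := by
      linear_combination (σ^2*α^2*rm + (μ*α-δ) - D) * h2 + hD2
    rcases mul_eq_zero.mp key with h | h
    · exact absurd h (ne_of_gt hs)
    · exact h
  -- linear forms
  have hA : α * (rp * (μ + α * σ^2 * rp)) = 2*c + (2*δ - μ*α) * rp := by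
    linear_combination hqp
  have hB : α * (rm * (μ + α * σ^2 * rm)) = 2*c + (2*δ - μ*α) * rm := by
    linear_combination hqm
  have hBpos : 0 < 2*c + (2*δ - μ*α) * rm := by nlinarith
  -- sum and product
  have hsum : σ^2*α^2 * (rp + rm) = -2*(μ*α-δ) := by linear_combination h1 + h2
  have hprod : (σ^2*α^2)^2 * (rp*rm) = -2*c*(σ^2*α^2) := by
    linear_combination (σ^2*α^2*rm)*h1 + (-(μ*α-δ)+D)*h2 - hD2
  have hABval : (σ^2*α^2)^2 * ((2*c + (2*δ - μ*α) * rp) * (2*c + (2*δ - μ*α) * rm))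
      = (σ^2*α^2) * (4*c^2*(σ^2*α^2) + 2*c*μ*α*(μ*α - 2*δ)) := by
    linear_combination (2*c*(2*δ-μ*α)*(σ^2*α^2))*hsum + (2*δ-μ*α)^2*hprod
  have hABpos : 0 < (2*c + (2*δ - μ*α) * rp) * (2*c + (2*δ - μ*α) * rm) := by
    have h0 : 0 < (σ^2*α^2)^2 * ((2*c + (2*δ - μ*α) * rp) * (2*c + (2*δ - μ*α) * rm)) := by
      rw [hABval]
      have t1 : 0 < c * (μ * α) := by positivity
      have t2 : (0:ℝ) < μ * α - 2 * δ := by linarith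
      nlinarith [mul_pos t1 t2, mul_pos (mul_pos hc hc) hs]
    by_contra h
    push_neg at h
    linarith [mul_nonpos_of_nonneg_of_nonpos (sq_nonneg (σ^2*α^2)) h]
  have hApos : 0 < 2*c + (2*δ - μ*α) * rp := by nlinarith [hABpos, hBpos]
  -- f values
  have hfp : 0 < rp * (μ + α * σ^2 * rp) := by nlinarith [hA, hApos]
  have hfm : 0 < rm * (μ + α * σ^2 * rm) := by nlinarith [hB, hBpos]
  have hlt : rp * (μ + α * σ^2 * rp) < rm * (μ + α * σ^2 * rm) := by
    nlinarith [hA, hB, hdiff]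
  have hratio1 : 1 < (rm * (μ + α * σ^2 * rm)) / (rp * (μ + α * σ^2 * rp)) :=
    (one_lt_div hfp).mpr hlt
  refine ⟨div_pos hfm hfp, mul_pos ?_ (Real.log_pos hratio1)⟩
  exact one_div_pos.mpr hdiff
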